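/- arXiv:1309.6555 — 2 statements merged into one kernel-verified Lean document; each statement's English description precedes it below -/
import Mathlib

section
/- For every odd index 2k+1 (k ≥ 1), the function ψ_{2k+1}(a;·) vanishes at t = 1 + a/2 and t = 3 + 3a/2: ψ_{2k+1}(a; 1 + a/2) = ψ_{2k+1}(a; 3 + 3a/2) = 0. -/
open MeasureTheory intervalIntegral Set

/-- essential sup norm on ℝ, as a real number -/
noncomputable def nrm (f : ℝ → ℝ) : ℝ := (eLpNorm f ⊤ volume).toReal

/-- supremum norm on ℝ -/
noncomputable def supNorm (f : ℝ → ℝ) : ℝ := ⨆ t, |f t|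

/-- ψ₁ on the base interval [0, a+2] -/
noncomputable def psi1base (a t : ℝ) : ℝ :=
  if t ≤ 1 then t - 1 else if t ≤ a + 1 then 0 else t - a - 1

/-- ψ₁(a;·): even (4+2a)-periodic extension of `psi1base a` -/
noncomputable def psi1 (a : ℝ) : ℝ → ℝ := fun t =>
  let T := 4 + 2 * a
  let s := t - T * ⌊t / T⌋
  if s ≤ a + 2 then psi1base a s else psi1base a (T - s)

/-- ψ₂ on the base interval [0, a+2] -/
noncomputable def psi2base (a t : ℝ) : ℝ :=
  if t ≤ 1 then (t - 1) ^ 2 / 2 - 1 / 2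
  else if t ≤ a + 1 then -(1 / 2)
  else (t - a - 1) ^ 2 / 2 - 1 / 2

/-- ψ₂(a;·): odd (4+2a)-periodic extension of `psi2base a` -/
noncomputable def psi2 (a : ℝ) : ℝ → ℝ := fun t =>
  let T := 4 + 2 * a
  let s := t - T * ⌊t / T⌋
  if s ≤ a + 2 then psi2base a s else -psi2base a (T - s)

/-- `IsPsi a r f` : f is the (r-1)-th (4+2a)-periodic integral with zero mean
of ψ₁(a;·), i.e. f = ψ_r(a;·). -/
def IsPsi (a : ℝ) : ℕ → (ℝ → ℝ) → Prop
  | 0, _ => False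
  | 1, f => f = psi1 a
  | (n + 2), f => ∃ g, IsPsi a (n + 1) g ∧
      (∀ s t : ℝ, f t - f s = ∫ u in s..t, g u) ∧
      (∫ t in (0:ℝ)..(4 + 2 * a), f t) = 0

/-- φ₀(t) = sgn (sin t) -/
noncomputable def phi0 (t : ℝ) : ℝ := Real.sign (Real.sin t)

/-- `IsPhi r f` : f is the Euler perfect spline φ_r, the r-th 2π-periodic
integral with zero mean of φ₀. -/
noncomputable def IsPhi : ℕ → (ℝ → ℝ) → Prop
  | 0, f => f = phi0
  | (n + 1), f => ∃ g, IsPhi n g ∧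
      (∀ s t : ℝ, f t - f s = ∫ u in s..t, g u) ∧
      (∫ t in (0:ℝ)..(2 * Real.pi), f t) = 0

/-- membership in L^r_{∞,∞}(ℝ): x^{(r-1)} locally absolutely continuous,
x and x^{(r)} essentially bounded. -/
def MemL (r : ℕ) (x : ℝ → ℝ) : Prop :=
  ContDiff ℝ (r - 1 : ℕ) x ∧
  (∀ s t : ℝ, iteratedDeriv (r - 1) x t - iteratedDeriv (r - 1) x s =
      ∫ u in s..t, iteratedDeriv r x u) ∧
  MemLp x ⊤ volume ∧ MemLp (iteratedDeriv r x) ⊤ volume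

/-- the spline Ψ_{a,b,λ}(t) = b · f(λ t), where f = ψ_r(a;·) -/
noncomputable def Psi (b lam : ℝ) (f : ℝ → ℝ) : ℝ → ℝ := fun t => b * f (lam * t)

/-!
`ψ₁(a;·)` is even and antiperiodic with half-period `c = a + 2`. Passing to the zero-mean primitive
keeps `c`-antiperiodicity (`f (t + c) + f t` is constant, and its mean over a period is twice the
mean of `f`, which is zero) and exchanges parity: a primitive of an odd function is even, and one
of an even function is odd up to the constant `f 0`, which antiperiodicity forces to vanish.
Hence `ψ_{2k+1}` is even and `c`-antiperiodic, so `ψ (c/2) = -ψ (-c/2) = -ψ (c/2)` vanishes,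
and so does `ψ (3c/2) = -ψ (c/2)`.
-/

section Primitive

variable {f g : ℝ → ℝ}

theorem continuous_of_primitive (hgi : ∀ s t, IntervalIntegrable g volume s t)
    (hfg : ∀ s t, f t - f s = ∫ u in s..t, g u) : Continuous f := by
  have hf : f = fun t => f 0 + ∫ u in (0 : ℝ)..t, g u := funext fun t => by linarith [hfg 0 t]
  rw [hf]
  exact continuous_const.add (continuous_primitive hgi 0)

theorem integral_zero_neg (g : ℝ → ℝ) (t : ℝ) :
    ∫ u in (0 : ℝ)..-t, g u = -∫ u in (0 : ℝ)..t, g (-u) := by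
  rw [integral_comp_neg, neg_zero, integral_symm]

theorem Function.Odd.even_primitive (hg : g.Odd) (hfg : ∀ s t, f t - f s = ∫ u in s..t, g u) :
    f.Even := fun t => by
  have hint : ∫ u in (0 : ℝ)..t, g (-u) = -∫ u in (0 : ℝ)..t, g u := by
    simp only [show ∀ u, g (-u) = -g u from hg, intervalIntegral.integral_neg]
  linarith [hfg 0 t, hfg 0 (-t), integral_zero_neg g t]

theorem Function.Even.odd_primitive_of_antiperiodic {c : ℝ} (hg : g.Even)
    (hfg : ∀ s t, f t - f s = ∫ u in s..t, g u) (hf : Function.Antiperiodic f c) : f.Odd := by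
  have hsum : ∀ t, f t + f (-t) = 2 * f 0 := fun t => by
    have hint : ∫ u in (0 : ℝ)..t, g (-u) = ∫ u in (0 : ℝ)..t, g u := by
      simp only [show ∀ u, g (-u) = g u from hg]
    linarith [hfg 0 t, hfg 0 (-t), integral_zero_neg g t]
  have hf0 : f 0 = 0 := by
    have h₁ := hf 0
    have h₂ := hf (-c)
    rw [zero_add] at h₁
    rw [neg_add_cancel] at h₂
    linarith [hsum c]
  intro t
  linarith [hsum t]

theorem Function.Antiperiodic.primitive_add_eq {c : ℝ} (hg : Function.Antiperiodic g c)
    (hfg : ∀ s t, f t - f s = ∫ u in s..t, g u) (t : ℝ) :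
    f (t + c) + f t = f c + f 0 := by
  have hshift : ∫ u in (0 : ℝ)..t, g (u + c) = ∫ u in c..t + c, g u := by
    simp [integral_comp_add_right]
  have hanti : ∫ u in (0 : ℝ)..t, g (u + c) = -∫ u in (0 : ℝ)..t, g u := by
    simp only [show ∀ u, g (u + c) = -g u from hg, intervalIntegral.integral_neg]
  linarith [hfg c (t + c), hfg 0 t]

theorem Function.Antiperiodic.antiperiodic_primitive {c : ℝ} (hc : c ≠ 0)
    (hg : Function.Antiperiodic g c) (hgi : ∀ s t, IntervalIntegrable g volume s t)
    (hfg : ∀ s t, f t - f s = ∫ u in s..t, g u) (hmean : ∫ t in (0 : ℝ)..2 * c, f t = 0) :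
    Function.Antiperiodic f c := by
  have hcont := continuous_of_primitive hgi hfg
  have hsum := hg.primitive_add_eq hfg
  have hmean' : ∫ t in (0 : ℝ)..2 * c, f t = c * (f c + f 0) := by
    have hshift : ∫ u in (0 : ℝ)..c, f (u + c) = ∫ t in c..2 * c, f t := by
      rw [integral_comp_add_right, zero_add, two_mul]
    calc ∫ t in (0 : ℝ)..2 * c, f t
        = (∫ u in (0 : ℝ)..c, f u) + ∫ t in c..2 * c, f t :=
          (integral_add_adjacent_intervals (hcont.intervalIntegrable _ _)
            (hcont.intervalIntegrable _ _)).symm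
      _ = ∫ u in (0 : ℝ)..c, (f (u + c) + f u) := by
          rw [← hshift, add_comm]
          exact (integral_add ((hcont.comp (continuous_add_const c)).intervalIntegrable _ _)
            (hcont.intervalIntegrable _ _)).symm
      _ = c * (f c + f 0) := by
          simp only [hsum, intervalIntegral.integral_const, sub_zero, smul_eq_mul]
  have hzero : f c + f 0 = 0 := by
    rcases mul_eq_zero.mp (hmean'.symm.trans hmean) with h | h
    · exact absurd h hc
    · exact h
  intro t
  linarith [hsum t]

theorem Function.Even.apply_half_eq_zero {c : ℝ} (hf : f.Even) (hc : Function.Antiperiodic f c) :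
    f (c / 2) = 0 := by
  have h := hc (-(c / 2))
  rw [show -(c / 2) + c = c / 2 by ring, hf] at h
  linarith

end Primitive

section Psi1

variable {a : ℝ}

noncomputable def psi1Period (a s : ℝ) : ℝ :=
  if s ≤ a + 2 then psi1base a s else psi1base a (4 + 2 * a - s)

theorem psi1_eq_psi1Period (ha : 0 ≤ a) (t : ℝ) :
    psi1 a t = psi1Period a ((4 + 2 * a) * Int.fract (t / (4 + 2 * a))) := by
  rw [Int.fract, mul_sub, mul_div_cancel₀ _ (by linarith)]
  rfl

theorem psi1base_reflect (ha : 0 ≤ a) (u : ℝ) :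
    psi1base a (a + 2 - u) = -psi1base a u := by
  unfold psi1base
  split_ifs <;> linarith

theorem psi1Period_add (ha : 0 ≤ a) {s : ℝ} (h₀ : 0 ≤ s) (h₁ : s ≤ a + 2) :
    psi1Period a (s + (a + 2)) = -psi1Period a s := by
  unfold psi1Period
  rw [if_pos h₁]
  split_ifs with h
  · rw [show s = 0 by linarith, zero_add, show a + 2 = a + 2 - 0 by ring,
      psi1base_reflect ha 0]
  · rw [show 4 + 2 * a - (s + (a + 2)) = a + 2 - s by ring, psi1base_reflect ha s]

theorem psi1Period_reflect (s : ℝ) :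
    psi1Period a (4 + 2 * a - s) = psi1Period a s := by
  unfold psi1Period
  rw [sub_sub_cancel]
  split_ifs <;> first | rfl | (congr 1; linarith)

theorem psi1_even (ha : 0 ≤ a) : (psi1 a).Even := fun t => by
  rw [psi1_eq_psi1Period ha, psi1_eq_psi1Period ha, neg_div]
  by_cases hx : Int.fract (t / (4 + 2 * a)) = 0
  · rw [Int.fract_neg_eq_zero.mpr hx, hx]
  · rw [Int.fract_neg hx, mul_one_sub, psi1Period_reflect]

theorem psi1_antiperiodic (ha : 0 ≤ a) : Function.Antiperiodic (psi1 a) (a + 2) := fun t => by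
  have hT : 0 < 4 + 2 * a := by linarith
  have hshift : (t + (a + 2)) / (4 + 2 * a) = t / (4 + 2 * a) + 1 / 2 := by
    field_simp
    ring
  rw [psi1_eq_psi1Period ha, psi1_eq_psi1Period ha, hshift]
  set x := Int.fract (t / (4 + 2 * a)) with hx
  have hx₀ : 0 ≤ x := Int.fract_nonneg _
  have hx₁ : x < 1 := Int.fract_lt_one _
  have hfloor : t / (4 + 2 * a) - x = ⌊t / (4 + 2 * a)⌋ := by rw [hx, Int.fract]; ring
  by_cases hhalf : x < 1 / 2
  · have hfr : Int.fract (t / (4 + 2 * a) + 1 / 2) = x + 1 / 2 :=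
      Int.fract_eq_iff.mpr ⟨by linarith, by linarith, ⌊t / (4 + 2 * a)⌋, by linarith⟩
    rw [hfr, show (4 + 2 * a) * (x + 1 / 2) = (4 + 2 * a) * x + (a + 2) by ring]
    exact psi1Period_add ha (by positivity) (by nlinarith)
  · have hfr : Int.fract (t / (4 + 2 * a) + 1 / 2) = x - 1 / 2 :=
      Int.fract_eq_iff.mpr ⟨by linarith, by linarith, ⌊t / (4 + 2 * a)⌋ + 1, by push_cast; linarith⟩
    have h := psi1Period_add ha (s := (4 + 2 * a) * (x - 1 / 2)) (by nlinarith) (by nlinarith)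
    rw [show (4 + 2 * a) * (x - 1 / 2) + (a + 2) = (4 + 2 * a) * x by ring] at h
    rw [hfr, h, neg_neg]

theorem abs_psi1_le_one (ha : 0 ≤ a) (t : ℝ) : |psi1 a t| ≤ 1 := by
  have hx₀ := Int.fract_nonneg (t / (4 + 2 * a))
  have hx₁ := Int.fract_lt_one (t / (4 + 2 * a))
  rw [psi1_eq_psi1Period ha, abs_le]
  unfold psi1Period psi1base
  split_ifs <;> constructor <;> nlinarith

theorem measurable_psi1Period : Measurable (psi1Period a) := by
  have hbase : Measurable (psi1base a) :=
    Measurable.ite measurableSet_Iic (by fun_prop) <|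
      Measurable.ite measurableSet_Iic measurable_const (by fun_prop)
  exact Measurable.ite measurableSet_Iic hbase (hbase.comp (by fun_prop))

theorem intervalIntegrable_psi1 (ha : 0 ≤ a) (s t : ℝ) :
    IntervalIntegrable (psi1 a) volume s t := by
  have hmeas : Measurable (psi1 a) := by
    rw [funext (psi1_eq_psi1Period ha)]
    exact measurable_psi1Period.comp (measurable_const.mul (measurable_fract.comp (by fun_prop)))
  have hloc : LocallyIntegrable (psi1 a) volume :=
    (memLp_top_of_bound hmeas.aestronglyMeasurable 1
      (Filter.Eventually.of_forall (abs_psi1_le_one ha))).locallyIntegrable le_top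
  exact (hloc.integrableOn_isCompact isCompact_uIcc).intervalIntegrable

end Psi1

namespace IsPsi

variable {a : ℝ}

theorem intervalIntegrable_antiperiodic (ha : 0 ≤ a) :
    ∀ {n : ℕ} {f : ℝ → ℝ}, IsPsi a n f →
      (∀ s t, IntervalIntegrable f volume s t) ∧ Function.Antiperiodic f (a + 2)
  | 1, _, rfl => ⟨intervalIntegrable_psi1 ha, psi1_antiperiodic ha⟩
  | _ + 2, f, ⟨_, hg, hfg, hmean⟩ => by
    obtain ⟨hgi, hg_anti⟩ := intervalIntegrable_antiperiodic ha hg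
    refine ⟨(continuous_of_primitive hgi hfg).intervalIntegrable,
      hg_anti.antiperiodic_primitive (by linarith) hgi hfg ?_⟩
    rwa [show 2 * (a + 2) = 4 + 2 * a by ring]

theorem parity (ha : 0 ≤ a) :
    ∀ {n : ℕ} {f : ℝ → ℝ}, IsPsi a n f → (Odd n → f.Even) ∧ (Even n → f.Odd)
  | 1, _, rfl => ⟨fun _ => psi1_even ha, fun h => absurd h (by decide)⟩
  | n + 2, f, hf@⟨_, hg, hfg, _⟩ => by
    obtain ⟨hg_even, hg_odd⟩ := parity ha hg
    refine ⟨fun hn => (hg_odd ?_).even_primitive hfg, fun hn =>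
      (hg_even ?_).odd_primitive_of_antiperiodic hfg (intervalIntegrable_antiperiodic ha hf).2⟩
      <;> simpa [parity_simps] using hn

end IsPsi

theorem stmt5_general (a : ℝ) (ha : 0 ≤ a) (k : ℕ) (f : ℝ → ℝ)
    (hf : IsPsi a (2 * k + 1) f) :
    f (1 + a / 2) = 0 ∧ f (3 + 3 * a / 2) = 0 := by
  have hanti := (hf.intervalIntegrable_antiperiodic ha).2
  have hzero : f ((a + 2) / 2) = 0 :=
    ((hf.parity ha).1 (odd_two_mul_add_one k)).apply_half_eq_zero hanti
  constructor
  · rwa [show 1 + a / 2 = (a + 2) / 2 by ring]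
  · rw [show 3 + 3 * a / 2 = (a + 2) / 2 + (a + 2) by ring, hanti, hzero, neg_zero]

theorem stmt5 (a : ℝ) (ha : 0 ≤ a) (k : ℕ) (hk : 1 ≤ k) (f : ℝ → ℝ)
    (hf : IsPsi a (2 * k + 1) f) :
    f (1 + a / 2) = 0 ∧ f (3 + 3 * a / 2) = 0 :=
  stmt5_general a ha k f hf
end

section
/- If a function Ψ attains its minimum at τ₁ and maximum at τ₂ on an interval, x is bounded with ‖x‖ ≤ ‖Ψ‖, and Ψ'(τ) > 0, x(τ) = Ψ(τ), x'(τ) > Ψ'(τ) at some τ ∈ (τ₁,τ₂), then for sufficiently small ε > 0 the function x_ε := (1−ε)x satisfies x_ε(τ₁) > Ψ(τ₁), x_ε(τ₂) < Ψ(τ₂), and there exists δ > 0 with x_ε(τ+δ) > Ψ(τ+δ) and x_ε(τ−δ) < Ψ(τ−δ); consequently x_ε − Ψ has at least 3 sign changes on (τ₁, τ₂). -/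
open MeasureTheory intervalIntegral Set

/-!
Put `S = ‖Ψ‖ > 0`. At the ends of `[τ₁, τ₂]` we have `|(1 - ε) x| ≤ (1 - ε) S < S = ±Ψ`, so
`x_ε - Ψ` is positive at `τ₁` and negative at `τ₂`. Since `x - Ψ` vanishes at `τ` with positive
derivative, it is negative at `τ - δ` and positive at `τ + δ` for small `δ`; replacing `x` by
`x_ε` moves these values by at most `ε S`, which keeps their signs for small `ε`. By continuity
the signs at `τ₁` and `τ₂` persist slightly inside the interval, giving four points of
alternating sign.
-/

open Filter

lemma exists_sub_neg_add_pos_of_deriv_pos {f : ℝ → ℝ} {a b c : ℝ} (hc : c ∈ Ioo a b)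
    (hf : 0 < deriv f c) (hfc : f c = 0) :
    ∃ δ > 0, a < c - δ ∧ c + δ < b ∧ f (c - δ) < 0 ∧ 0 < f (c + δ) := by
  obtain ⟨r, hr, hball⟩ := Metric.eventually_nhds_iff_ball.1
    ((eventually_nhdsWithin_sign_eq_of_deriv_pos hf hfc).and (Ioo_mem_nhds hc.1 hc.2))
  have mem_ball (s : ℝ) (hs : |s| < r) : c + s ∈ Metric.ball c r := by
    rwa [Metric.mem_ball, Real.dist_eq, add_sub_cancel_left]
  have hleft :=
    hball _ (mem_ball (-(r / 2)) (by rw [abs_neg, abs_of_pos (half_pos hr)]; linarith))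
  have hright := hball _ (mem_ball (r / 2) (by rw [abs_of_pos (half_pos hr)]; linarith))
  rw [← sub_eq_add_neg] at hleft
  refine ⟨r / 2, half_pos hr, hleft.2.1, hright.2.2, ?_, ?_⟩
  · rw [← sign_eq_neg_one_iff, hleft.1, sign_eq_neg_one_iff]
    linarith
  · rw [← sign_eq_one_iff, hright.1, sign_eq_one_iff]
    linarith

lemma ContinuousAt.exists_mem_Ioo_pos_of_pos_left {f : ℝ → ℝ} {a b : ℝ} (hab : a < b)
    (hf : ContinuousAt f a) (ha : 0 < f a) : ∃ t ∈ Ioo a b, 0 < f t :=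
  (Eventually.and (Ioo_mem_nhdsGT hab)
    (nhdsWithin_le_nhds (hf.eventually (lt_mem_nhds ha)))).exists

lemma ContinuousAt.exists_mem_Ioo_neg_of_neg_right {f : ℝ → ℝ} {a b : ℝ} (hab : a < b)
    (hf : ContinuousAt f b) (hb : f b < 0) : ∃ t ∈ Ioo a b, f t < 0 :=
  (Eventually.and (Ioo_mem_nhdsLT hab)
    (nhdsWithin_le_nhds (hf.eventually (gt_mem_nhds hb)))).exists

lemma exists_three_sign_changes {f : ℝ → ℝ} {a p q b : ℝ} (hfa : ContinuousAt f a)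
    (hfb : ContinuousAt f b) (hap : a < p) (hpq : p < q) (hqb : q < b)
    (ha : 0 < f a) (hp : f p < 0) (hq : 0 < f q) (hb : f b < 0) :
    ∃ t₁ t₂ t₃ t₄ : ℝ, a < t₁ ∧ t₁ < t₂ ∧ t₂ < t₃ ∧ t₃ < t₄ ∧ t₄ < b ∧
      f t₁ * f t₂ < 0 ∧ f t₂ * f t₃ < 0 ∧ f t₃ * f t₄ < 0 := by
  obtain ⟨t₁, ⟨hat₁, ht₁p⟩, ht₁⟩ := hfa.exists_mem_Ioo_pos_of_pos_left hap ha
  obtain ⟨t₄, ⟨hqt₄, ht₄b⟩, ht₄⟩ := hfb.exists_mem_Ioo_neg_of_neg_right hqb hb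
  exact ⟨t₁, p, q, t₄, hat₁, ht₁p, hpq, hqt₄, ht₄b, mul_neg_of_pos_of_neg ht₁ hp,
    mul_neg_of_neg_of_pos hp hq, mul_neg_of_pos_of_neg hq ht₄⟩

lemma abs_one_sub_mul_lt {y ε S : ℝ} (hy : |y| ≤ S) (hS : 0 < S) (hε : 0 < ε) (hε₁ : ε < 1) :
    |(1 - ε) * y| < S := by
  rw [abs_mul, abs_of_pos (sub_pos.2 hε₁)]
  calc (1 - ε) * |y| ≤ (1 - ε) * S := by gcongr
    _ < S := by nlinarith

lemma abs_one_sub_mul_sub_self_le {y ε S : ℝ} (hy : |y| ≤ S) (hε : 0 ≤ ε) :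
    |(1 - ε) * y - y| ≤ ε * S := by
  rw [show (1 - ε) * y - y = -(ε * y) by ring, abs_neg, abs_mul, abs_of_nonneg hε]
  exact mul_le_mul_of_nonneg_left hy hε

theorem stmt15_general (Ψ x : ℝ → ℝ) (hΨ : ContDiff ℝ 1 Ψ) (hx : ContDiff ℝ 1 x)
    (hxbd : BddAbove (Set.range fun t => |x t|))
    (τ₁ τ₂ : ℝ) (hmono : StrictMonoOn Ψ (Set.Icc τ₁ τ₂))
    (hmin : Ψ τ₁ = -supNorm Ψ) (hmax : Ψ τ₂ = supNorm Ψ)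
    (hnx : supNorm x ≤ supNorm Ψ)
    (τ : ℝ) (hτ : τ ∈ Set.Ioo τ₁ τ₂)
    (heq : x τ = Ψ τ) (hx' : deriv Ψ τ < deriv x τ) :
    ∃ ε₀ > 0, ∀ ε : ℝ, 0 < ε → ε < ε₀ →
      (1 - ε) * x τ₁ > Ψ τ₁ ∧ (1 - ε) * x τ₂ < Ψ τ₂ ∧
      (∃ δ > 0, (1 - ε) * x (τ + δ) > Ψ (τ + δ) ∧
        (1 - ε) * x (τ - δ) < Ψ (τ - δ)) ∧
      ∃ t₁ t₂ t₃ t₄ : ℝ, τ₁ < t₁ ∧ t₁ < t₂ ∧ t₂ < t₃ ∧ t₃ < t₄ ∧ t₄ < τ₂ ∧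
        ((1 - ε) * x t₁ - Ψ t₁) * ((1 - ε) * x t₂ - Ψ t₂) < 0 ∧
        ((1 - ε) * x t₂ - Ψ t₂) * ((1 - ε) * x t₃ - Ψ t₃) < 0 ∧
        ((1 - ε) * x t₃ - Ψ t₃) * ((1 - ε) * x t₄ - Ψ t₄) < 0 := by
  set S := supNorm Ψ
  have hτ₁₂ : τ₁ < τ₂ := hτ.1.trans hτ.2
  have hS : 0 < S := by
    have := hmono (left_mem_Icc.2 hτ₁₂.le) (right_mem_Icc.2 hτ₁₂.le) hτ₁₂
    linarith
  have hxS (t : ℝ) : |x t| ≤ S := (le_ciSup hxbd t).trans hnx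
  have hderiv : 0 < deriv (fun t => x t - Ψ t) τ := by
    rw [deriv_fun_sub (hx.differentiable one_ne_zero τ) (hΨ.differentiable one_ne_zero τ)]
    linarith
  obtain ⟨δ, hδ, hτδ₁, hτδ₂, hneg, hpos⟩ :=
    exists_sub_neg_add_pos_of_deriv_pos hτ hderiv (sub_eq_zero.2 heq)
  obtain ⟨gap, hgap, hgap_right, hgap_left⟩ :
      ∃ g > 0, g ≤ x (τ + δ) - Ψ (τ + δ) ∧ g ≤ Ψ (τ - δ) - x (τ - δ) :=
    ⟨_, lt_min hpos (by linarith), min_le_left _ _, min_le_right _ _⟩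
  refine ⟨min 1 (gap / S), lt_min one_pos (div_pos hgap hS), fun ε hε hεε₀ => ?_⟩
  have hε₁ : ε < 1 := hεε₀.trans_le (min_le_left _ _)
  have hεS : ε * S < gap := (lt_div_iff₀ hS).1 (hεε₀.trans_le (min_le_right _ _))
  have hshift (t : ℝ) := abs_le.1 (abs_one_sub_mul_sub_self_le (hxS t) hε.le)
  have hτ₁ : (1 - ε) * x τ₁ > Ψ τ₁ := hmin ▸ (abs_lt.1 (abs_one_sub_mul_lt (hxS τ₁) hS hε hε₁)).1
  have hτ₂ : (1 - ε) * x τ₂ < Ψ τ₂ := hmax ▸ (abs_lt.1 (abs_one_sub_mul_lt (hxS τ₂) hS hε hε₁)).2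
  have hright : (1 - ε) * x (τ + δ) > Ψ (τ + δ) := by
    linarith [hshift (τ + δ)]
  have hleft : (1 - ε) * x (τ - δ) < Ψ (τ - δ) := by
    linarith [hshift (τ - δ)]
  have hcont : Continuous fun t => (1 - ε) * x t - Ψ t :=
    (continuous_const.mul hx.continuous).sub hΨ.continuous
  refine ⟨hτ₁, hτ₂, ⟨δ, hδ, hright, hleft⟩, ?_⟩
  exact exists_three_sign_changes hcont.continuousAt hcont.continuousAt hτδ₁ (by linarith) hτδ₂
    (sub_pos.2 hτ₁) (sub_neg.2 hleft) (sub_pos.2 hright) (sub_neg.2 hτ₂)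

theorem stmt15 (Ψ x : ℝ → ℝ) (hΨ : ContDiff ℝ 1 Ψ) (hx : ContDiff ℝ 1 x)
    (hΨbd : BddAbove (Set.range fun t => |Ψ t|))
    (hxbd : BddAbove (Set.range fun t => |x t|))
    (τ₁ τ₂ : ℝ) (hmono : StrictMonoOn Ψ (Set.Icc τ₁ τ₂))
    (hmin : Ψ τ₁ = -supNorm Ψ) (hmax : Ψ τ₂ = supNorm Ψ)
    (hnx : supNorm x ≤ supNorm Ψ)
    (τ : ℝ) (hτ : τ ∈ Set.Ioo τ₁ τ₂)
    (hΨ' : 0 < deriv Ψ τ) (heq : x τ = Ψ τ) (hx' : deriv Ψ τ < deriv x τ) :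
    ∃ ε₀ > 0, ∀ ε : ℝ, 0 < ε → ε < ε₀ →
      (1 - ε) * x τ₁ > Ψ τ₁ ∧ (1 - ε) * x τ₂ < Ψ τ₂ ∧
      (∃ δ > 0, (1 - ε) * x (τ + δ) > Ψ (τ + δ) ∧
        (1 - ε) * x (τ - δ) < Ψ (τ - δ)) ∧
      ∃ t₁ t₂ t₃ t₄ : ℝ, τ₁ < t₁ ∧ t₁ < t₂ ∧ t₂ < t₃ ∧ t₃ < t₄ ∧ t₄ < τ₂ ∧
        ((1 - ε) * x t₁ - Ψ t₁) * ((1 - ε) * x t₂ - Ψ t₂) < 0 ∧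
        ((1 - ε) * x t₂ - Ψ t₂) * ((1 - ε) * x t₃ - Ψ t₃) < 0 ∧
        ((1 - ε) * x t₃ - Ψ t₃) * ((1 - ε) * x t₄ - Ψ t₄) < 0 :=
  stmt15_general Ψ x hΨ hx hxbd τ₁ τ₂ hmono hmin hmax hnx τ hτ heq hx'
end
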